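/- arXiv:0706.4138 — 2 statements merged into one kernel-verified Lean document; each statement's English description precedes it below -/
import Mathlib

section
/- The nuclear norm is the convex envelope of the rank function on the operator-norm unit ball: (i) the function X ↦ ‖X‖_* is convex on {X ∈ ℝ^{m×n} : ‖X‖ ≤ 1} and satisfies ‖X‖_* ≤ rank(X) for all X in this set; and (ii) if g is any convex function on {X ∈ ℝ^{m×n} : ‖X‖ ≤ 1} with g(X) ≤ rank(X) for all X in this set, then g(X) ≤ ‖X‖_* for all X in this set. -/
open Matrix

/-- The operator norm (largest singular value / induced 2-norm) of a real matrix. -/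
noncomputable def opNorm {m n : Type*} [Fintype m] [Fintype n] [DecidableEq n]
    (X : Matrix m n ℝ) : ℝ :=
  ‖LinearMap.toContinuousLinearMap (Matrix.toEuclideanLin X)‖

/-- The nuclear norm (sum of singular values) of a real matrix, as the trace of √(XᵀX). -/
noncomputable def nucNorm {m n : Type*} [Fintype m] [Fintype n] [DecidableEq n]
    (X : Matrix m n ℝ) : ℝ :=
  ((Matrix.posSemidef_conjTranspose_mul_self X).1.eigenvectorUnitary.1 *
    diagonal ((√·) ∘ (Matrix.posSemidef_conjTranspose_mul_self X).1.eigenvalues) *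
    (star (Matrix.posSemidef_conjTranspose_mul_self X).1.eigenvectorUnitary : Matrix n n ℝ)).trace

/-!
Write `X = ∑ σᵢ uᵢ vᵢᵀ` (singular value decomposition) and let `P t = ∑_{i ∈ t} uᵢ vᵢᵀ`.
Each `P t` lies in the unit ball and has rank at most `#t`, and `‖X‖_* = tr ((P univ)ᵀ X)`,
while `tr (Zᵀ X) ≤ ‖X‖_*` for every `Z` in the unit ball; so the nuclear norm is a maximum
of linear functionals, hence convex.
If `‖X‖ ≤ 1` then all `σᵢ ∈ [0, 1]`, which gives `‖X‖_* ≤ rank X`. Moreover, choosing `t` at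
random, containing each `i` independently with probability `σᵢ`, gives `𝔼 (P t) = X` and
`𝔼 #t = ‖X‖_*`; by Jensen, `g X ≤ 𝔼 g (P t) ≤ 𝔼 rank (P t) ≤ ‖X‖_*`.
-/

open Finset

theorem Matrix.rank_sum_vecMulVec_le {ι m n R : Type*} [Fintype n] [CommRing R]
    [StrongRankCondition R] (s : Finset ι) (u : ι → m → R) (v : ι → n → R) :
    (∑ i ∈ s, vecMulVec (u i) (v i)).rank ≤ s.card := by
  have hfactor : ∑ i ∈ s, vecMulVec (u i) (v i) =
      (of fun a (i : s) => u i a) * of fun (i : s) b => v i b := by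
    ext a b
    simp only [sum_apply, vecMulVec_apply, mul_apply, of_apply]
    exact (sum_coe_sort s fun i => u i a * v i b).symm
  rw [hfactor]
  exact (rank_mul_le_left _ _).trans ((rank_le_card_width _).trans (Fintype.card_coe s).le)

theorem Matrix.dotProduct_le_one_of_dotProduct_self_le_one {n : Type*} [Fintype n] {u w : n → ℝ}
    (hu : u ⬝ᵥ u ≤ 1) (hw : w ⬝ᵥ w ≤ 1) : u ⬝ᵥ w ≤ 1 := by
  -- `2 u ⬝ᵥ w ≤ u ⬝ᵥ u + w ⬝ᵥ w`
  have h : 0 ≤ (u - w) ⬝ᵥ (u - w) := Fintype.sum_nonneg fun _ => mul_self_nonneg _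
  rw [sub_dotProduct, dotProduct_sub, dotProduct_sub, dotProduct_comm w u] at h
  linarith

theorem Matrix.trace_transpose_vecMulVec_mul {m n R : Type*} [Fintype m] [Fintype n] [CommRing R]
    (u : m → R) (v : n → R) (Z : Matrix m n R) :
    ((vecMulVec u v)ᵀ * Z).trace = u ⬝ᵥ (Z *ᵥ v) := by
  rw [transpose_vecMulVec, vecMulVec_mul, trace_vecMulVec, dotProduct_comm, dotProduct_mulVec]

section BernoulliWeight

variable {ι R : Type*} [Fintype ι] [DecidableEq ι] [CommRing R]

/-- The probability that a random subset, containing each `i` independently with probability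
`p i`, equals `t`. -/
def bernoulliWeight (p : ι → R) (t : Finset ι) : R :=
  (∏ i ∈ t, p i) * ∏ i ∈ univ \ t, (1 - p i)

theorem sum_bernoulliWeight (p : ι → R) : ∑ t, bernoulliWeight p t = 1 := by
  simpa [bernoulliWeight, powerset_univ] using (prod_add p (fun i => 1 - p i) univ).symm

theorem sum_bernoulliWeight_filter_mem (p : ι → R) (i : ι) :
    ∑ t with i ∈ t, bernoulliWeight p t = p i := by
  -- expand `∏ j, (p j + q j)` where `q` is `1 - p` with the `i`-th factor replaced by `0`
  set q := Function.update (fun j => 1 - p j) i 0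
  have hprod : ∏ j, (p j + q j) = p i := by
    have : (fun j => p j + q j) = Function.update (1 : ι → R) i (p i) := by
      funext j
      by_cases hj : j = i
      · subst hj; simp [q]
      · simp [q, hj]
    rw [this, prod_update_of_mem (mem_univ i)]
    simp
  have hterm (t : Finset ι) :
      (∏ j ∈ t, p j) * ∏ j ∈ univ \ t, q j =
        if i ∈ t then bernoulliWeight p t else 0 := by
    by_cases hi : i ∈ t
    · rw [if_pos hi, bernoulliWeight]
      congr 1
      exact prod_congr rfl fun j hj => Function.update_of_ne (by rintro rfl; simp_all) _ _
    · rw [if_neg hi]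
      exact mul_eq_zero_of_right _ (prod_eq_zero (by simpa using hi) (by simp [q]))
  rw [sum_filter, ← hprod, prod_add, powerset_univ]
  exact (sum_congr rfl fun t _ => hterm t).symm

theorem sum_bernoulliWeight_smul_sum {M : Type*} [AddCommGroup M] [Module R M] (p : ι → R)
    (x : ι → M) : ∑ t, bernoulliWeight p t • ∑ i ∈ t, x i = ∑ i, p i • x i := by
  simp_rw [smul_sum, ← sum_bernoulliWeight_filter_mem p, sum_smul]
  exact sum_comm' (by simp)

theorem bernoulliWeight_nonneg [PartialOrder R] [IsOrderedRing R] {p : ι → R}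
    (hp₀ : ∀ i, 0 ≤ p i) (hp₁ : ∀ i, p i ≤ 1) (t : Finset ι) :
    0 ≤ bernoulliWeight p t :=
  mul_nonneg (prod_nonneg fun i _ => hp₀ i) (prod_nonneg fun i _ => sub_nonneg.2 (hp₁ i))

end BernoulliWeight

theorem EuclideanSpace.norm_toLp_sq {n : Type*} [Fintype n] (y : n → ℝ) :
    ‖(WithLp.toLp 2 y : EuclideanSpace ℝ n)‖ ^ 2 = y ⬝ᵥ y := by
  rw [← real_inner_self_eq_norm_sq, EuclideanSpace.inner_toLp_toLp, star_trivial]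

section OpNorm

variable {m n : Type*} [Fintype m] [Fintype n] [DecidableEq n]

open scoped Matrix.Norms.L2Operator in
theorem convex_setOf_opNorm_le_one : Convex ℝ {X : Matrix m n ℝ | opNorm X ≤ 1} := by
  have h : {X : Matrix m n ℝ | opNorm X ≤ 1} = Metric.closedBall 0 1 := by
    ext X
    simp [opNorm, l2_opNorm_def]
  exact h ▸ convex_closedBall 0 1

theorem opNorm_le_one_iff {X : Matrix m n ℝ} :
    opNorm X ≤ 1 ↔ ∀ y, (X *ᵥ y) ⬝ᵥ (X *ᵥ y) ≤ y ⬝ᵥ y := by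
  rw [opNorm, ContinuousLinearMap.opNorm_le_iff zero_le_one]
  refine (WithLp.equiv 2 (n → ℝ)).symm.surjective.forall.trans (forall_congr' fun y => ?_)
  rw [one_mul, ← sq_le_sq₀ (norm_nonneg _) (norm_nonneg _)]
  exact (EuclideanSpace.norm_toLp_sq (X *ᵥ y)) ▸ (EuclideanSpace.norm_toLp_sq y) ▸ Iff.rfl

end OpNorm

namespace Matrix

variable {m n : Type*} [Fintype m] [Fintype n] [DecidableEq n] (X : Matrix m n ℝ)

noncomputable def rightSingularVector (i : n) : n → ℝ :=
  (posSemidef_conjTranspose_mul_self X).1.eigenvectorBasis i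

noncomputable def singularValue (i : n) : ℝ :=
  √((posSemidef_conjTranspose_mul_self X).1.eigenvalues i)

/-- Zero when `X.singularValue i = 0`, because `⁻¹` sends `0` to `0`. -/
noncomputable def leftSingularVector (i : n) : m → ℝ :=
  (X.singularValue i)⁻¹ • (X *ᵥ X.rightSingularVector i)

theorem singularValue_nonneg (i : n) : 0 ≤ X.singularValue i := Real.sqrt_nonneg _

theorem singularValue_sq (i : n) :
    X.singularValue i ^ 2 = (posSemidef_conjTranspose_mul_self X).1.eigenvalues i :=
  Real.sq_sqrt ((posSemidef_conjTranspose_mul_self X).eigenvalues_nonneg i)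

theorem rightSingularVector_dotProduct (i j : n) :
    X.rightSingularVector i ⬝ᵥ X.rightSingularVector j = if i = j then 1 else 0 := by
  have h := orthonormal_iff_ite.mp
    (posSemidef_conjTranspose_mul_self X).1.eigenvectorBasis.orthonormal i j
  rwa [EuclideanSpace.inner_eq_star_dotProduct, star_trivial, dotProduct_comm] at h

theorem sum_dotProduct_smul_rightSingularVector (y : n → ℝ) :
    ∑ i, (X.rightSingularVector i ⬝ᵥ y) • X.rightSingularVector i = y := by
  have h := congrArg WithLp.ofLp
    ((posSemidef_conjTranspose_mul_self X).1.eigenvectorBasis.sum_repr' (WithLp.toLp 2 y))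
  simpa [EuclideanSpace.inner_eq_star_dotProduct, rightSingularVector, dotProduct_comm y] using h

theorem sum_sq_dotProduct_rightSingularVector (y : n → ℝ) :
    ∑ i, (X.rightSingularVector i ⬝ᵥ y) ^ 2 = y ⬝ᵥ y := by
  calc ∑ i, (X.rightSingularVector i ⬝ᵥ y) ^ 2
      = (∑ i, (X.rightSingularVector i ⬝ᵥ y) • X.rightSingularVector i) ⬝ᵥ y := by
        simp [sum_dotProduct, sq]
    _ = y ⬝ᵥ y := by rw [sum_dotProduct_smul_rightSingularVector]

theorem mulVec_rightSingularVector_dotProduct (i j : n) :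
    (X *ᵥ X.rightSingularVector i) ⬝ᵥ (X *ᵥ X.rightSingularVector j) =
      if i = j then X.singularValue i ^ 2 else 0 := by
  have hev : (Xᴴ * X) *ᵥ X.rightSingularVector j =
      (posSemidef_conjTranspose_mul_self X).1.eigenvalues j • X.rightSingularVector j :=
    (posSemidef_conjTranspose_mul_self X).1.mulVec_eigenvectorBasis j
  have hgram : (X *ᵥ X.rightSingularVector i) ⬝ᵥ (X *ᵥ X.rightSingularVector j) =
      X.rightSingularVector i ⬝ᵥ ((Xᴴ * X) *ᵥ X.rightSingularVector j) := by
    rw [← mulVec_mulVec, dotProduct_mulVec (X.rightSingularVector i),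
      conjTranspose_eq_transpose_of_trivial, vecMul_transpose]
  rw [hgram, hev, dotProduct_smul, rightSingularVector_dotProduct]
  split_ifs with hij <;> simp [hij, singularValue_sq]

theorem singularValue_smul_leftSingularVector (i : n) :
    X.singularValue i • X.leftSingularVector i = X *ᵥ X.rightSingularVector i := by
  rcases eq_or_ne (X.singularValue i) 0 with h | h
  · have hsq := X.mulVec_rightSingularVector_dotProduct i i
    rw [if_pos rfl, h] at hsq
    have hzero : X *ᵥ X.rightSingularVector i = 0 := by simpa using hsq
    simp [h, hzero]
  · rw [leftSingularVector, smul_smul, mul_inv_cancel₀ h, one_smul]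

theorem leftSingularVector_dotProduct (i j : n) :
    X.leftSingularVector i ⬝ᵥ X.leftSingularVector j =
      if i = j ∧ X.singularValue i ≠ 0 then 1 else 0 := by
  rw [leftSingularVector, leftSingularVector, smul_dotProduct, dotProduct_smul,
    mulVec_rightSingularVector_dotProduct]
  by_cases hij : i = j
  · subst hij
    by_cases h : X.singularValue i = 0 <;> simp [h]
    field_simp
  · simp [hij]

theorem leftSingularVector_dotProduct_self_le_one (i : n) :
    X.leftSingularVector i ⬝ᵥ X.leftSingularVector i ≤ 1 := by
  rw [leftSingularVector_dotProduct]
  split_ifs <;> norm_num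

theorem leftSingularVector_dotProduct_mulVec (i : n) :
    X.leftSingularVector i ⬝ᵥ (X *ᵥ X.rightSingularVector i) = X.singularValue i := by
  rw [leftSingularVector, smul_dotProduct, mulVec_rightSingularVector_dotProduct, if_pos rfl]
  by_cases h : X.singularValue i = 0 <;> simp [h]
  field_simp

theorem eq_sum_singularValue_smul_vecMulVec :
    X = ∑ i, X.singularValue i •
      vecMulVec (X.leftSingularVector i) (X.rightSingularVector i) := by
  refine ext_iff_mulVec.mpr fun y => ?_
  simp_rw [← smul_vecMulVec, singularValue_smul_leftSingularVector, sum_mulVec, vecMulVec_mulVec,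
    op_smul_eq_smul, ← mulVec_smul, ← mulVec_sum, sum_dotProduct_smul_rightSingularVector]

theorem nucNorm_eq_sum_singularValue : nucNorm X = ∑ i, X.singularValue i := by
  rw [nucNorm, trace_mul_cycle, Unitary.coe_star_mul_self, one_mul, trace_diagonal]
  rfl

theorem rank_eq_card_singularValue_ne_zero : X.rank = #{i | X.singularValue i ≠ 0} := by
  rw [← rank_conjTranspose_mul_self,
    (posSemidef_conjTranspose_mul_self X).1.rank_eq_card_non_zero_eigs,
    Fintype.card_subtype]
  refine congrArg card (filter_congr fun i _ => ?_)
  rw [singularValue, Real.sqrt_ne_zero ((posSemidef_conjTranspose_mul_self X).eigenvalues_nonneg i)]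

theorem singularValue_le_one (hX : opNorm X ≤ 1) (i : n) : X.singularValue i ≤ 1 := by
  have h := opNorm_le_one_iff.mp hX (X.rightSingularVector i)
  rw [mulVec_rightSingularVector_dotProduct, rightSingularVector_dotProduct, if_pos rfl,
    if_pos rfl] at h
  exact (pow_le_one_iff_of_nonneg (X.singularValue_nonneg i) two_ne_zero).mp h

noncomputable def partialIsometry (t : Finset n) : Matrix m n ℝ :=
  ∑ i ∈ t, vecMulVec (X.leftSingularVector i) (X.rightSingularVector i)

theorem rank_partialIsometry_le (t : Finset n) : (X.partialIsometry t).rank ≤ t.card :=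
  rank_sum_vecMulVec_le t _ _

theorem partialIsometry_mulVec (t : Finset n) (y : n → ℝ) :
    X.partialIsometry t *ᵥ y =
      ∑ i ∈ t, (X.rightSingularVector i ⬝ᵥ y) • X.leftSingularVector i := by
  simp [partialIsometry, sum_mulVec, vecMulVec_mulVec]

theorem opNorm_partialIsometry_le_one (t : Finset n) : opNorm (X.partialIsometry t) ≤ 1 := by
  refine opNorm_le_one_iff.mpr fun y => ?_
  set c := fun i => X.rightSingularVector i ⬝ᵥ y
  have horth :
      (∑ i ∈ t, c i • X.leftSingularVector i) ⬝ᵥ (∑ i ∈ t, c i • X.leftSingularVector i)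
      = ∑ i ∈ t, c i ^ 2 * (X.leftSingularVector i ⬝ᵥ X.leftSingularVector i) := by
    simp_rw [sum_dotProduct, dotProduct_sum, smul_dotProduct, dotProduct_smul]
    refine sum_congr rfl fun i hi => ?_
    rw [sum_eq_single_of_mem i hi fun j _ hji => by
      simp [leftSingularVector_dotProduct, hji.symm]]
    simp only [smul_eq_mul]
    ring
  calc (X.partialIsometry t *ᵥ y) ⬝ᵥ (X.partialIsometry t *ᵥ y)
      = ∑ i ∈ t, c i ^ 2 * (X.leftSingularVector i ⬝ᵥ X.leftSingularVector i) := by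
        rw [partialIsometry_mulVec, horth]
    _ ≤ ∑ i, c i ^ 2 :=
        (sum_le_sum fun i _ => mul_le_of_le_one_right (sq_nonneg _)
          (X.leftSingularVector_dotProduct_self_le_one i)).trans
          (sum_le_univ_sum_of_nonneg fun i => sq_nonneg (c i))
    _ = y ⬝ᵥ y := X.sum_sq_dotProduct_rightSingularVector y

theorem trace_transpose_partialIsometry_univ_mul :
    ((X.partialIsometry univ)ᵀ * X).trace = nucNorm X := by
  simp_rw [partialIsometry, transpose_sum, Matrix.sum_mul, trace_sum,
    trace_transpose_vecMulVec_mul, leftSingularVector_dotProduct_mulVec,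
    nucNorm_eq_sum_singularValue]

theorem trace_transpose_mul_le_nucNorm {Z : Matrix m n ℝ} (hZ : opNorm Z ≤ 1) :
    (Zᵀ * X).trace ≤ nucNorm X := by
  have hterm (i : n) : X.leftSingularVector i ⬝ᵥ (Z *ᵥ X.rightSingularVector i) ≤ 1 := by
    refine dotProduct_le_one_of_dotProduct_self_le_one ?_ ?_
    · exact X.leftSingularVector_dotProduct_self_le_one i
    · simpa [rightSingularVector_dotProduct] using
        opNorm_le_one_iff.mp hZ (X.rightSingularVector i)
  calc (Zᵀ * X).trace = (Xᵀ * Z).trace := by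
        rw [← trace_transpose, transpose_mul, transpose_transpose]
    _ = ∑ i, X.singularValue i *
          (X.leftSingularVector i ⬝ᵥ (Z *ᵥ X.rightSingularVector i)) := by
        conv_lhs => rw [eq_sum_singularValue_smul_vecMulVec X]
        simp_rw [transpose_sum, Matrix.sum_mul, trace_sum, transpose_smul, smul_mul, trace_smul,
          trace_transpose_vecMulVec_mul, smul_eq_mul]
    _ ≤ ∑ i, X.singularValue i := sum_le_sum fun i _ =>
        mul_le_of_le_one_right (X.singularValue_nonneg i) (hterm i)
    _ = nucNorm X := (nucNorm_eq_sum_singularValue X).symm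

end Matrix

section NuclearNorm

variable {m n : Type*} [Fintype m] [Fintype n] [DecidableEq n]

theorem convexOn_nucNorm : ConvexOn ℝ Set.univ (nucNorm : Matrix m n ℝ → ℝ) := by
  refine ⟨convex_univ, fun A _ B _ a b ha hb hab => ?_⟩
  set P := (a • A + b • B).partialIsometry univ
  calc nucNorm (a • A + b • B) = a * (Pᵀ * A).trace + b * (Pᵀ * B).trace := by
        rw [← trace_transpose_partialIsometry_univ_mul, Matrix.mul_add, trace_add,
          Matrix.mul_smul, Matrix.mul_smul, trace_smul, trace_smul, smul_eq_mul, smul_eq_mul]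
    _ ≤ a * nucNorm A + b * nucNorm B := by
        have hP := (a • A + b • B).opNorm_partialIsometry_le_one univ
        gcongr
        · exact A.trace_transpose_mul_le_nucNorm hP
        · exact B.trace_transpose_mul_le_nucNorm hP

theorem nucNorm_le_rank {X : Matrix m n ℝ} (hX : opNorm X ≤ 1) : nucNorm X ≤ X.rank := by
  rw [nucNorm_eq_sum_singularValue, rank_eq_card_singularValue_ne_zero, ← sum_filter_ne_zero,
    card_eq_sum_ones, Nat.cast_sum, Nat.cast_one]
  exact sum_le_sum fun i _ => X.singularValue_le_one hX i

theorem le_nucNorm_of_convexOn_of_le_rank {g : Matrix m n ℝ → ℝ}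
    (hg : ConvexOn ℝ {X | opNorm X ≤ 1} g) (hg_rank : ∀ X, opNorm X ≤ 1 → g X ≤ X.rank)
    {X : Matrix m n ℝ} (hX : opNorm X ≤ 1) : g X ≤ nucNorm X := by
  set w := bernoulliWeight X.singularValue
  have hw : ∀ t ∈ univ, 0 ≤ w t := fun t _ =>
    bernoulliWeight_nonneg X.singularValue_nonneg (X.singularValue_le_one hX) t
  have hX_eq : ∑ t, w t • X.partialIsometry t = X := by
    simp only [w, partialIsometry, sum_bernoulliWeight_smul_sum]
    exact (eq_sum_singularValue_smul_vecMulVec X).symm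
  calc g X = g (∑ t, w t • X.partialIsometry t) := by rw [hX_eq]
    _ ≤ ∑ t, w t • g (X.partialIsometry t) :=
        hg.map_sum_le hw (sum_bernoulliWeight _) fun t _ => X.opNorm_partialIsometry_le_one t
    _ ≤ ∑ t, w t • (t.card : ℝ) := sum_le_sum fun t ht => smul_le_smul_of_nonneg_left
        ((hg_rank _ (X.opNorm_partialIsometry_le_one t)).trans
          (Nat.cast_le.mpr (X.rank_partialIsometry_le t))) (hw t ht)
    _ = nucNorm X := by
        simpa [nucNorm_eq_sum_singularValue] using
          sum_bernoulliWeight_smul_sum X.singularValue fun _ => (1 : ℝ)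

end NuclearNorm

/-- The nuclear norm is the convex envelope of the rank function on the operator-norm
unit ball: it is convex there, lies below the rank, and dominates every convex function
lying below the rank on that set. -/
theorem nucNorm_convex_envelope_of_rank (m n : ℕ) :
    ConvexOn ℝ {X : Matrix (Fin m) (Fin n) ℝ | opNorm X ≤ 1} nucNorm ∧
    (∀ X : Matrix (Fin m) (Fin n) ℝ, opNorm X ≤ 1 → nucNorm X ≤ (X.rank : ℝ)) ∧
    (∀ g : Matrix (Fin m) (Fin n) ℝ → ℝ,
      ConvexOn ℝ {X : Matrix (Fin m) (Fin n) ℝ | opNorm X ≤ 1} g →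
      (∀ X : Matrix (Fin m) (Fin n) ℝ, opNorm X ≤ 1 → g X ≤ (X.rank : ℝ)) →
      ∀ X : Matrix (Fin m) (Fin n) ℝ, opNorm X ≤ 1 → g X ≤ nucNorm X) :=
  ⟨convexOn_nucNorm.subset (Set.subset_univ _) convex_setOf_opNorm_le_one,
    fun _ => nucNorm_le_rank, fun _ hg hg_rank _ => le_nucNorm_of_convexOn_of_le_rank hg hg_rank⟩
end

section
/- Let X ∈ ℝ^{m×n} and let r ≥ rank(X). Then there exist matrices L ∈ ℝ^{m×r} and R ∈ ℝ^{n×r} such that X = L·R' and (‖L‖_F² + ‖R‖_F²)/2 = ‖X‖_*. Consequently, for any linear map 𝒜 : ℝ^{m×n} → ℝ^p, any b ∈ ℝ^p, and any r greater than or equal to the rank of some nuclear-norm minimizer of {X : 𝒜(X) = b}, the optimal value of minimizing (‖L‖_F² + ‖R‖_F²)/2 over pairs (L,R) ∈ ℝ^{m×r} × ℝ^{n×r} with 𝒜(L·R') = b equals the minimum of ‖X‖_* over {X : 𝒜(X) = b}. -/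
open Matrix

/-- The Frobenius norm of a real matrix. -/
noncomputable def frobNorm {m n : Type*} [Fintype m] [Fintype n] (X : Matrix m n ℝ) : ℝ :=
  Real.sqrt (∑ i, ∑ j, X i j ^ 2)

/-!
Let `V` be an orthonormal eigenbasis of `XᵀX` and `σ` the square roots of its eigenvalues, so that
`‖X‖_* = ∑ σᵢ` and `X V = U diag σ` with `U = X V diag σ⁻¹` a partial isometry. The balanced
factors `L = U diag √σ`, `R = V diag √σ` satisfy `‖L‖_F² = ‖R‖_F² = ∑ σᵢ`, and only `rank X` of
their columns are nonzero, so they fit into `r` columns. Conversely, for `Y = L Rᵀ` with singular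
data `U, V, σ` we have `‖Y‖_* = tr (Uᵀ Y V) = ⟪Uᵀ L, Vᵀ R⟫_F`, which by AM–GM is at most
`(‖Uᵀ L‖_F² + ‖Vᵀ R‖_F²) / 2 ≤ (‖L‖_F² + ‖R‖_F²) / 2`, since `U Uᵀ` and `V Vᵀ` are projections.
-/

namespace Matrix

theorem exists_mul_transpose_eq_diagonal_indicator {n r : Type*} [Fintype r] [DecidableEq n]
    (s : Finset n) (hs : s.card ≤ Fintype.card r) :
    ∃ E : Matrix n r ℝ, E * Eᵀ = diagonal fun j => if j ∈ s then 1 else 0 := by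
  classical
  obtain ⟨e⟩ : Nonempty (s ↪ r) := Function.Embedding.nonempty_of_card_le (by simpa using hs)
  refine ⟨of fun j k => if h : j ∈ s then if e ⟨j, h⟩ = k then 1 else 0 else 0, ?_⟩
  ext j j'
  by_cases hj : j ∈ s <;> by_cases hj' : j' ∈ s <;> simp [mul_apply, diagonal_apply, hj, hj']
  rintro rfl
  exact hj' hj

variable {m n : Type*} [Fintype m] [Fintype n]

theorem trace_transpose_mul_self_eq_sum (M : Matrix m n ℝ) :
    (Mᵀ * M).trace = ∑ i, ∑ j, M i j ^ 2 := by
  rw [Finset.sum_comm]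
  simp only [trace, diag, mul_apply, transpose_apply, sq]

theorem trace_transpose_mul_self_nonneg (M : Matrix m n ℝ) : 0 ≤ (Mᵀ * M).trace := by
  rw [trace_transpose_mul_self_eq_sum]
  positivity

end Matrix

section Frobenius

variable {m n k r : Type*} [Fintype m] [Fintype n] [Fintype k] [Fintype r]

theorem frobNorm_eq_sqrt_trace (M : Matrix m n ℝ) : frobNorm M = √((Mᵀ * M).trace) := by
  rw [frobNorm, trace_transpose_mul_self_eq_sum]

theorem frobNorm_sq_eq_trace (M : Matrix m n ℝ) : frobNorm M ^ 2 = (Mᵀ * M).trace := by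
  rw [frobNorm_eq_sqrt_trace, Real.sq_sqrt (trace_transpose_mul_self_nonneg M)]

theorem trace_mul_transpose_le (A B : Matrix m n ℝ) :
    (A * Bᵀ).trace ≤ (frobNorm A ^ 2 + frobNorm B ^ 2) / 2 := by
  have h := trace_transpose_mul_self_nonneg (A - B)
  have hAB : (Aᵀ * B).trace = (A * Bᵀ).trace := by
    rw [trace_mul_comm, ← trace_transpose, transpose_mul, transpose_transpose]
  have hBA : (Bᵀ * A).trace = (A * Bᵀ).trace := trace_mul_comm _ _
  rw [frobNorm_sq_eq_trace, frobNorm_sq_eq_trace]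
  simp only [transpose_sub, Matrix.sub_mul, Matrix.mul_sub, trace_sub] at h
  linarith

theorem frobNorm_transpose_mul_sq_le {U : Matrix m k ℝ} (hU : IsIdempotentElem (U * Uᵀ))
    (M : Matrix m n ℝ) : frobNorm (Uᵀ * M) ^ 2 ≤ frobNorm M ^ 2 := by
  classical
  have hP : (1 - U * Uᵀ)ᵀ = 1 - U * Uᵀ := by
    rw [transpose_sub, transpose_one, transpose_mul, transpose_transpose]
  have h := trace_transpose_mul_self_nonneg ((1 - U * Uᵀ) * M)
  rw [transpose_mul, hP, Matrix.mul_assoc, ← Matrix.mul_assoc (1 - U * Uᵀ), hU.one_sub.eq] at h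
  rw [frobNorm_sq_eq_trace, frobNorm_sq_eq_trace, transpose_mul, transpose_transpose]
  simp only [Matrix.sub_mul, Matrix.mul_sub, Matrix.one_mul, trace_sub, Matrix.mul_assoc] at h ⊢
  linarith

theorem frobNorm_mul_of_mul_mul_transpose_eq {M : Matrix m n ℝ} {E : Matrix n r ℝ}
    (h : M * (E * Eᵀ) = M) : frobNorm (M * E) = frobNorm M := by
  rw [frobNorm_eq_sqrt_trace, frobNorm_eq_sqrt_trace, trace_mul_comm, transpose_mul,
    Matrix.mul_assoc, ← Matrix.mul_assoc E, ← Matrix.mul_assoc M, h, trace_mul_comm]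

theorem frobNorm_mul_diagonal_sqrt_sq [DecidableEq n] {W : Matrix m n ℝ} {d : n → ℝ}
    (hd : ∀ i, 0 ≤ d i) (hW : Wᵀ * W * diagonal d = diagonal d) :
    frobNorm (W * diagonal fun i => √(d i)) ^ 2 = ∑ i, d i := by
  have hDD : ((diagonal fun i => √(d i)) * diagonal fun i => √(d i)) = diagonal d := by
    rw [diagonal_mul_diagonal]
    exact congrArg diagonal (funext fun i => Real.mul_self_sqrt (hd i))
  rw [frobNorm_sq_eq_trace, transpose_mul, diagonal_transpose, Matrix.mul_assoc, trace_mul_comm,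
    Matrix.mul_assoc, Matrix.mul_assoc, hDD, ← Matrix.mul_assoc, hW, trace_diagonal]

end Frobenius

namespace Matrix

section SingularValues

variable {m n : Type*} [Fintype m] [Fintype n] [DecidableEq n] (X : Matrix m n ℝ)

noncomputable def rightSingularVectors : Matrix n n ℝ :=
  (posSemidef_conjTranspose_mul_self X).1.eigenvectorUnitary

noncomputable def singularValues (i : n) : ℝ :=
  √((posSemidef_conjTranspose_mul_self X).1.eigenvalues i)

-- Since `0⁻¹ = 0`, the columns belonging to zero singular values vanish, so this is a partial
-- isometry rather than an isometry.
noncomputable def leftSingularVectors : Matrix m n ℝ :=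
  X * rightSingularVectors X * diagonal fun i => (singularValues X i)⁻¹

theorem singularValues_nonneg (i : n) : 0 ≤ singularValues X i :=
  Real.sqrt_nonneg _

theorem transpose_rightSingularVectors_mul_self :
    (rightSingularVectors X)ᵀ * rightSingularVectors X = 1 := by
  rw [rightSingularVectors, ← conjTranspose_eq_transpose_of_trivial, ← star_eq_conjTranspose,
    Unitary.coe_star_mul_self]

theorem rightSingularVectors_mul_transpose_self :
    rightSingularVectors X * (rightSingularVectors X)ᵀ = 1 := by
  rw [rightSingularVectors, ← conjTranspose_eq_transpose_of_trivial, ← star_eq_conjTranspose,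
    Unitary.mul_star_self_of_mem (SetLike.coe_mem _)]

theorem transpose_mul_self_mul_rightSingularVectors :
    (X * rightSingularVectors X)ᵀ * (X * rightSingularVectors X) =
      diagonal fun i => singularValues X i ^ 2 := by
  have hX := posSemidef_conjTranspose_mul_self X
  have h := hX.1.conjStarAlgAut_star_eigenvectorUnitary
  rw [Unitary.conjStarAlgAut_apply, Unitary.coe_star, star_star, star_eq_conjTranspose] at h
  rw [← conjTranspose_eq_transpose_of_trivial, conjTranspose_mul, rightSingularVectors,
    Matrix.mul_assoc, ← Matrix.mul_assoc Xᴴ, ← Matrix.mul_assoc, h]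
  congr 1
  funext i
  simp only [singularValues, Function.comp_apply, RCLike.ofReal_real_eq_id, id]
  exact (Real.sq_sqrt (hX.eigenvalues_nonneg i)).symm

theorem nucNorm_eq_sum_singularValues : nucNorm X = ∑ i, singularValues X i := by
  rw [nucNorm, trace_mul_cycle, Unitary.coe_star_mul_self, Matrix.one_mul, trace_diagonal]
  rfl

theorem card_filter_singularValues_ne_zero :
    (Finset.univ.filter fun i => singularValues X i ≠ 0).card = X.rank := by
  have hX := posSemidef_conjTranspose_mul_self X
  rw [← rank_conjTranspose_mul_self, hX.1.rank_eq_card_non_zero_eigs, ← Fintype.card_subtype]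
  refine Fintype.card_congr (Equiv.subtypeEquivRight fun i => ?_)
  rw [singularValues, ne_eq, Real.sqrt_eq_zero (hX.eigenvalues_nonneg i)]

theorem transpose_leftSingularVectors_mul :
    (leftSingularVectors X)ᵀ * (X * rightSingularVectors X) = diagonal (singularValues X) := by
  rw [leftSingularVectors, transpose_mul, diagonal_transpose, Matrix.mul_assoc,
    transpose_mul_self_mul_rightSingularVectors, diagonal_mul_diagonal]
  congr 1
  funext i
  rw [sq, ← mul_assoc, inv_mul_mul_self]

theorem leftSingularVectors_mul_diagonal :
    leftSingularVectors X * diagonal (singularValues X) = X * rightSingularVectors X := by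
  -- the columns of `X V` belonging to zero singular values have zero norm
  have hker : X * rightSingularVectors X *
      diagonal (fun i => (singularValues X i)⁻¹ * singularValues X i - 1) = 0 := by
    rw [← conjTranspose_mul_self_eq_zero, conjTranspose_eq_transpose_of_trivial, transpose_mul,
      diagonal_transpose, Matrix.mul_assoc, ← Matrix.mul_assoc (X * rightSingularVectors X)ᵀ,
      transpose_mul_self_mul_rightSingularVectors, diagonal_mul_diagonal, diagonal_mul_diagonal]
    refine (congrArg diagonal (funext fun i => ?_)).trans diagonal_zero
    by_cases h : singularValues X i = 0 <;> simp [h]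
  have hsub : (diagonal fun i => (singularValues X i)⁻¹ * singularValues X i - 1) =
      (diagonal fun i => (singularValues X i)⁻¹ * singularValues X i) - 1 := by
    rw [← diagonal_one, diagonal_sub]
  rw [hsub, Matrix.mul_sub, Matrix.mul_one, sub_eq_zero] at hker
  rw [leftSingularVectors, Matrix.mul_assoc, diagonal_mul_diagonal, hker]

theorem isIdempotentElem_leftSingularVectors_mul_transpose :
    IsIdempotentElem (leftSingularVectors X * (leftSingularVectors X)ᵀ) := by
  set U := leftSingularVectors X
  have hU : U = X * rightSingularVectors X * diagonal fun i => (singularValues X i)⁻¹ := rfl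
  have hUU : Uᵀ * U = diagonal fun i => singularValues X i * (singularValues X i)⁻¹ := by
    nth_rewrite 2 [hU]
    rw [← Matrix.mul_assoc, transpose_leftSingularVectors_mul, diagonal_mul_diagonal]
  have hUP : U * Uᵀ * U = U := by
    rw [Matrix.mul_assoc, hUU, hU, Matrix.mul_assoc, diagonal_mul_diagonal]
    congr 2
    funext i
    by_cases h : singularValues X i = 0 <;> simp [h]
  rw [IsIdempotentElem, ← Matrix.mul_assoc, hUP]

end SingularValues

end Matrix

section Factorization

variable {m n r : Type*} [Fintype m] [Fintype n] [Fintype r] [DecidableEq n]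

theorem nucNorm_mul_transpose_le (L : Matrix m r ℝ) (R : Matrix n r ℝ) :
    nucNorm (L * Rᵀ) ≤ (frobNorm L ^ 2 + frobNorm R ^ 2) / 2 := by
  set U := leftSingularVectors (L * Rᵀ)
  set V := rightSingularVectors (L * Rᵀ)
  have hdual : nucNorm (L * Rᵀ) = (Uᵀ * L * (Vᵀ * R)ᵀ).trace := by
    rw [nucNorm_eq_sum_singularValues, ← trace_diagonal, ← transpose_leftSingularVectors_mul]
    simp only [transpose_mul, transpose_transpose, Matrix.mul_assoc]
    rfl
  have hU : frobNorm (Uᵀ * L) ^ 2 ≤ frobNorm L ^ 2 :=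
    frobNorm_transpose_mul_sq_le (isIdempotentElem_leftSingularVectors_mul_transpose _) L
  have hV : frobNorm (Vᵀ * R) ^ 2 ≤ frobNorm R ^ 2 := by
    refine frobNorm_transpose_mul_sq_le ?_ R
    rw [rightSingularVectors_mul_transpose_self]
    exact IsIdempotentElem.one
  calc nucNorm (L * Rᵀ) = (Uᵀ * L * (Vᵀ * R)ᵀ).trace := hdual
    _ ≤ (frobNorm (Uᵀ * L) ^ 2 + frobNorm (Vᵀ * R) ^ 2) / 2 := trace_mul_transpose_le _ _
    _ ≤ (frobNorm L ^ 2 + frobNorm R ^ 2) / 2 := by linarith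

theorem exists_mul_transpose_eq_of_rank_le (X : Matrix m n ℝ) (hX : X.rank ≤ Fintype.card r) :
    ∃ (L : Matrix m r ℝ) (R : Matrix n r ℝ),
      X = L * Rᵀ ∧ frobNorm L ^ 2 = nucNorm X ∧ frobNorm R ^ 2 = nucNorm X := by
  set σ := singularValues X
  set U := leftSingularVectors X
  set V := rightSingularVectors X
  set D : Matrix n n ℝ := diagonal fun i => √(σ i)
  obtain ⟨E, hE⟩ := exists_mul_transpose_eq_diagonal_indicator
    (Finset.univ.filter fun i => σ i ≠ 0) (r := r) (by rwa [card_filter_singularValues_ne_zero])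
  -- `E Eᵀ` projects onto the coordinates with `σ i ≠ 0`, and `D` vanishes off them
  have hDE : D * (E * Eᵀ) = D := by
    rw [hE, diagonal_mul_diagonal]
    congr 1
    funext i
    by_cases h : σ i = 0 <;> simp [h]
  have hDD : D * Dᵀ = diagonal σ := by
    rw [diagonal_transpose, diagonal_mul_diagonal]
    exact congrArg diagonal (funext fun i => Real.mul_self_sqrt (singularValues_nonneg X i))
  have hUσ : Uᵀ * U * diagonal σ = diagonal σ := by
    rw [Matrix.mul_assoc, leftSingularVectors_mul_diagonal, transpose_leftSingularVectors_mul]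
  have hVσ : Vᵀ * V * diagonal σ = diagonal σ := by
    rw [transpose_rightSingularVectors_mul_self, Matrix.one_mul]
  refine ⟨U * D * E, V * D * E, ?_, ?_, ?_⟩
  · have h : U * D * E * (V * D * E)ᵀ = U * (D * (E * Eᵀ) * Dᵀ) * Vᵀ := by
      simp only [transpose_mul, Matrix.mul_assoc]
    rw [h, hDE, hDD, leftSingularVectors_mul_diagonal, Matrix.mul_assoc,
      rightSingularVectors_mul_transpose_self, Matrix.mul_one]
  · rw [frobNorm_mul_of_mul_mul_transpose_eq (by rw [Matrix.mul_assoc, hDE]),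
      frobNorm_mul_diagonal_sqrt_sq (singularValues_nonneg X) hUσ, nucNorm_eq_sum_singularValues]
  · rw [frobNorm_mul_of_mul_mul_transpose_eq (by rw [Matrix.mul_assoc, hDE]),
      frobNorm_mul_diagonal_sqrt_sq (singularValues_nonneg X) hVσ, nucNorm_eq_sum_singularValues]

end Factorization

/-- If r ≥ rank X then X admits a factorization X = L Rᵀ with
(‖L‖_F² + ‖R‖_F²)/2 = ‖X‖₊. Consequently, if X is a nuclear-norm minimizer of
{Y : 𝒜(Y) = b} of rank at most r, the optimal value of the factored problem
min (‖L‖_F² + ‖R‖_F²)/2 subject to 𝒜(L Rᵀ) = b is exactly ‖X‖₊ (and is attained). -/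
theorem factored_problem_equals_nucNorm_min (m n r : ℕ)
    (X : Matrix (Fin m) (Fin n) ℝ) (hrank : X.rank ≤ r) :
    (∃ (L : Matrix (Fin m) (Fin r) ℝ) (R : Matrix (Fin n) (Fin r) ℝ),
        X = L * Rᵀ ∧ (frobNorm L ^ 2 + frobNorm R ^ 2) / 2 = nucNorm X) ∧
    (∀ (p : ℕ) (𝒜 : Matrix (Fin m) (Fin n) ℝ →ₗ[ℝ] EuclideanSpace ℝ (Fin p))
        (b : EuclideanSpace ℝ (Fin p)),
      𝒜 X = b → (∀ Y : Matrix (Fin m) (Fin n) ℝ, 𝒜 Y = b → nucNorm X ≤ nucNorm Y) →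
      IsLeast {c : ℝ | ∃ (L : Matrix (Fin m) (Fin r) ℝ) (R : Matrix (Fin n) (Fin r) ℝ),
          𝒜 (L * Rᵀ) = b ∧ c = (frobNorm L ^ 2 + frobNorm R ^ 2) / 2}
        (nucNorm X)) := by
  obtain ⟨L, R, hLR, hL, hR⟩ :=
    exists_mul_transpose_eq_of_rank_le (r := Fin r) X (by rwa [Fintype.card_fin])
  have hval : (frobNorm L ^ 2 + frobNorm R ^ 2) / 2 = nucNorm X := by
    rw [hL, hR]
    ring
  refine ⟨⟨L, R, hLR, hval⟩, fun p 𝒜 b hXb hmin => ⟨⟨L, R, hLR ▸ hXb, hval.symm⟩, ?_⟩⟩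
  rintro c ⟨L', R', hL'R', rfl⟩
  exact (hmin _ hL'R').trans (nucNorm_mul_transpose_le L' R')
end
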